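/- arXiv:0705.4213 — 4 statements merged into one kernel-verified Lean document; each statement's English description precedes it below -/
import Mathlib

section
/- Let $M$ be a $2d$-dimensional symplectic vector space over a field $k$ of characteristic $\neq 2$, and $R, N, L$ pairwise transverse lagrangian subspaces (i.e. $R \cap N = N \cap L = R \cap L = 0$). Define isomorphisms: $\epsilon_0: L \to R$ sending $l$ to the unique $r \in R$ with $r \equiv l \bmod N$; $\epsilon_1: N \to R$ sending $n$ to the unique $r \in R$ with $r \equiv n \bmod L$; and $\epsilon_2: L \to N$ sending $l$ to the unique $n \in N$ with $n \equiv l \bmod R$. Then on top exterior powers, $\operatorname{id}_{\det N} \otimes \det(\epsilon_0) = (-1)^d\, \det(\epsilon_1) \otimes \det(\epsilon_2)$ as maps $\det N \otimes \det L \to \det R \otimes \det N$. -/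
/-!
Transversality of `R` to `N` and to `L` forces `ε₁ ∘ ε₂ = -ε₀`, so `⋀^d ε₀` is `(-1)^d` times
`⋀^d ε₁ ∘ ⋀^d ε₂`. Since `N` is lagrangian it has dimension `d`, so `⋀^d N` is a line and
`(⋀^d ε₁ x) ⊗ y = (⋀^d ε₁ y) ⊗ x` for `x, y ∈ ⋀^d N`. The equality of maps is checked on the
decomposable generators `(n₁∧…∧n_d) ⊗ (l₁∧…∧l_d)`, which span `det N ⊗ det L`.
-/

open TensorProduct

theorem AlternatingMap.apply_eq_basis_det_smul {R M N ι : Type*} [CommRing R]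
    [AddCommGroup M] [Module R M] [AddCommGroup N] [Module R N] [Fintype ι] [DecidableEq ι]
    (e : Module.Basis ι R M) (f : M [⋀^ι]→ₗ[R] N) (v : ι → M) :
    f v = e.det v • f e := by
  suffices f = (LinearMap.toSpanSingleton R N (f e)).compAlternatingMap e.det from
    congr($this v)
  refine e.ext_alternating fun i hi => ?_
  let σ : Equiv.Perm ι := Equiv.ofBijective i (Finite.injective_iff_bijective.1 hi)
  change f (e ∘ σ) = (e.det (e ∘ σ)) • f e
  simp [AlternatingMap.map_perm, Module.Basis.det_self]

theorem ExteriorAlgebra.ιMulti_comp_tmul_ιMulti_comm {R V W : Type*} [CommRing R]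
    [StrongRankCondition R] [AddCommGroup V] [Module R V] [Module.Free R V] [Module.Finite R V]
    [AddCommGroup W] [Module R W] {d : ℕ} (hV : Module.finrank R V = d) (f : V →ₗ[R] W)
    (u v : Fin d → V) :
    ιMulti R d (f ∘ u) ⊗ₜ[R] ιMulti R d v = ιMulti R d (f ∘ v) ⊗ₜ[R] ιMulti R d u := by
  let e := Module.finBasisOfFinrankEq R V hV
  have hf : ∀ w, ιMulti R d (f ∘ w) = e.det w • ιMulti R d (f ∘ e) :=
    ((ιMulti R d).compLinearMap f).apply_eq_basis_det_smul e
  rw [hf u, hf v, (ιMulti R d).apply_eq_basis_det_smul e u,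
    (ιMulti R d).apply_eq_basis_det_smul e v, smul_tmul_smul, smul_tmul_smul, mul_comm]

theorem ExteriorAlgebra.ιMulti_neg {R V : Type*} [CommRing R] [AddCommGroup V] [Module R V]
    {d : ℕ} (v : Fin d → V) : ιMulti R d (fun i => -v i) = (-1 : R) ^ d • ιMulti R d v := by
  simpa using (ιMulti R d).map_smul_univ (fun _ => (-1 : R)) v

theorem LinearMap.BilinForm.two_mul_finrank_eq_of_orthogonal_eq_self {K V : Type*} [Field K]
    [AddCommGroup V] [Module K V] [FiniteDimensional K V] {B : LinearMap.BilinForm K V}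
    (hrefl : B.IsRefl) (hnd : B.Nondegenerate) {W : Submodule K V} (hW : B.orthogonal W = W) :
    2 * Module.finrank K W = Module.finrank K V := by
  have := finrank_add_finrank_orthogonal hrefl W
  rw [hW, orthogonal_top_eq_bot hnd, inf_bot_eq, finrank_bot, add_zero] at this
  omega

theorem Submodule.comp_eq_neg_of_disjoint {R M : Type*} [Ring R] [AddCommGroup M] [Module R M]
    {P N L : Submodule R M} (hPN : Disjoint P N) (hPL : Disjoint P L)
    {ε₀ : L → P} (hε₀ : ∀ l, (ε₀ l : M) - l ∈ N)
    {ε₁ : N → P} (hε₁ : ∀ n, (ε₁ n : M) - n ∈ L)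
    {ε₂ : L → N} (hε₂ : ∀ l, (ε₂ l : M) - l ∈ P) (l : L) :
    ε₁ (ε₂ l) = -ε₀ l := by
  have h₂ : (ε₂ l : M) - l + ε₀ l = 0 := by
    refine Submodule.disjoint_def.mp hPN _ (P.add_mem (hε₂ l) (ε₀ l).2) ?_
    convert N.add_mem (ε₂ l).2 (hε₀ l) using 1
    abel
  have h₁ : (ε₁ (ε₂ l) : M) + ε₀ l = 0 := by
    refine Submodule.disjoint_def.mp hPL _ (P.add_mem (ε₁ (ε₂ l)).2 (ε₀ l).2) ?_
    convert L.add_mem (L.add_mem (hε₁ (ε₂ l)) l.2) (h₂ ▸ L.zero_mem) using 1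
    abel
  ext
  simpa [eq_neg_iff_add_eq_zero] using h₁

theorem statement2_general {k M : Type*} [Field k]
    [AddCommGroup M] [Module k M] [FiniteDimensional k M]
    (d : ℕ) (hdim : Module.finrank k M = 2 * d)
    (ω : M →ₗ[k] M →ₗ[k] k)
    (halt : ∀ m : M, ω m m = 0)
    (hnd : ∀ m : M, (∀ m' : M, ω m m' = 0) → m = 0)
    (R N L : Submodule k M)
    (hN : LinearMap.BilinForm.orthogonal ω N = N)
    (hRN : R ⊓ N = ⊥) (hRL : R ⊓ L = ⊥)
    (ε₀ : ↥L →ₗ[k] ↥R) (hε₀ : ∀ l : ↥L, (↑(ε₀ l) : M) - ↑l ∈ N)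
    (ε₁ : ↥N →ₗ[k] ↥R) (hε₁ : ∀ n : ↥N, (↑(ε₁ n) : M) - ↑n ∈ L)
    (ε₂ : ↥L →ₗ[k] ↥N) (hε₂ : ∀ l : ↥L, (↑(ε₂ l) : M) - ↑l ∈ R) :
    ∀ (n : Fin d → ↥N) (l : Fin d → ↥L),
      (ExteriorAlgebra.ιMulti k d (fun i => ε₀ (l i)))
          ⊗ₜ[k] (ExteriorAlgebra.ιMulti k d n)
        = ((-1 : k)) ^ d •
          ((ExteriorAlgebra.ιMulti k d (fun i => ε₁ (n i)))
            ⊗ₜ[k] (ExteriorAlgebra.ιMulti k d (fun i => ε₂ (l i)))) := by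
  intro n l
  have hrefl : LinearMap.BilinForm.IsRefl ω := LinearMap.BilinForm.IsAlt.isRefl halt
  have hdN : Module.finrank k N = d := by
    have := LinearMap.BilinForm.two_mul_finrank_eq_of_orthogonal_eq_self hrefl
      ⟨hnd, fun m hm => hnd m fun m' => hrefl _ _ (hm m')⟩ hN
    omega
  have hε : ∀ i, ε₀ (l i) = -ε₁ (ε₂ (l i)) := fun i => by
    rw [Submodule.comp_eq_neg_of_disjoint (disjoint_iff.mpr hRN) (disjoint_iff.mpr hRL)
      hε₀ hε₁ hε₂, neg_neg]
  simp_rw [hε, ExteriorAlgebra.ιMulti_neg, ← smul_tmul']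
  congr 1
  exact ExteriorAlgebra.ιMulti_comp_tmul_ιMulti_comm hdN ε₁ (fun i => ε₂ (l i)) n

theorem statement2 {k M : Type*} [Field k] (h2 : (2 : k) ≠ 0)
    [AddCommGroup M] [Module k M] [FiniteDimensional k M]
    (d : ℕ) (hdim : Module.finrank k M = 2 * d)
    (ω : M →ₗ[k] M →ₗ[k] k)
    (halt : ∀ m : M, ω m m = 0)
    (hnd : ∀ m : M, (∀ m' : M, ω m m' = 0) → m = 0)
    (R N L : Submodule k M)
    (hR : LinearMap.BilinForm.orthogonal ω R = R)
    (hN : LinearMap.BilinForm.orthogonal ω N = N)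
    (hL : LinearMap.BilinForm.orthogonal ω L = L)
    (hRN : R ⊓ N = ⊥) (hNL : N ⊓ L = ⊥) (hRL : R ⊓ L = ⊥)
    (ε₀ : ↥L →ₗ[k] ↥R) (hε₀ : ∀ l : ↥L, (↑(ε₀ l) : M) - ↑l ∈ N)
    (ε₁ : ↥N →ₗ[k] ↥R) (hε₁ : ∀ n : ↥N, (↑(ε₁ n) : M) - ↑n ∈ L)
    (ε₂ : ↥L →ₗ[k] ↥N) (hε₂ : ∀ l : ↥L, (↑(ε₂ l) : M) - ↑l ∈ R) :
    ∀ (n : Fin d → ↥N) (l : Fin d → ↥L),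
      (ExteriorAlgebra.ιMulti k d (fun i => ε₀ (l i)))
          ⊗ₜ[k] (ExteriorAlgebra.ιMulti k d n)
        = ((-1 : k)) ^ d •
          ((ExteriorAlgebra.ιMulti k d (fun i => ε₁ (n i)))
            ⊗ₜ[k] (ExteriorAlgebra.ιMulti k d (fun i => ε₂ (l i)))) :=
  statement2_general d hdim ω halt hnd R N L hN hRN hRL ε₀ hε₀ ε₁ hε₁ ε₂ hε₂
end

section
/- Let $M$ be a $2d$-dimensional symplectic space over a finite field $k = \mathbb{F}_q$, $q$ odd, $\psi$ a nontrivial additive character. For lagrangian subspaces $N, L$ with $N \cap L = 0$, let $\bar{L} = L \times k$ and $\bar{N} = N \times k$ as subgroups of the Heisenberg group $H = M \times k$ with product $(m_1,a_1)(m_2,a_2) = (m_1+m_2, a_1+a_2+\tfrac12\omega\langle m_1,m_2\rangle)$. Define $\tilde F_{N,L}: H \to \mathbb{C}$ by $\tilde F_{N,L}(h) = \chi_N(\bar n)\chi_L(\bar l)$ if $h = \bar n \bar l$ with $\bar n \in \bar N, \bar l \in \bar L$, and $0$ otherwise, where $\chi_L(l,a) = \psi(a)$. Then the convolution satisfies $\tilde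 F_{L,N} * \tilde F_{N,L} = q^{2d+1}\, \tilde F_{L,L}$, where $(f_1 * f_2)(h) = \sum_{v \in H} f_1(hv^{-1}) f_2(v)$. -/
/-!
Since the radical of `ω` and `(N + L)^⊥` both lie in `N^⊥ ∩ L^⊥ = N ∩ L = 0`, we get
`M = N ⊕ L`. Write `h = (n₀ + l₀, a)` and `v = (n + l, b)` accordingly. As `N` and `L` are
isotropic, the summand `F̃_{L,N}(h v⁻¹) F̃_{N,L}(v)` equals `ψ(a + ½ω(n₀, l₀)) ψ(ω(l, n₀))`,
independently of `n` and `b`. Summing over `l ∈ L` gives `|L|` when `n₀ = 0`, and `0`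
otherwise, because then `l ↦ ω(l, n₀)` is a nonzero linear form on `L` (as `n₀ ∉ L = L^⊥`)
and `ψ` is nontrivial.
-/

/-- Heisenberg group multiplication on `M × k`. -/
def Hmul {k M : Type*} [Field k] [AddCommGroup M] [Module k M]
    (ω : M →ₗ[k] M →ₗ[k] k) (h₁ h₂ : M × k) : M × k :=
  (h₁.1 + h₂.1, h₁.2 + h₂.2 + 2⁻¹ * ω h₁.1 h₂.1)

/-- Heisenberg group inversion on `M × k`. -/
def Hinv {k M : Type*} [Field k] [AddCommGroup M] [Module k M]
    (h : M × k) : M × k :=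
  (-h.1, -h.2)

open LinearMap.BilinForm

theorem AddChar.sum_apply_linearMap_eq_zero {k V R : Type*} [Field k] [AddCommGroup V]
    [Module k V] [Fintype V] [CommRing R] [IsDomain R] [CharZero R] {ψ : AddChar k R}
    (hψ : ψ ≠ 0) {f : V →ₗ[k] k} (hf : f ≠ 0) : ∑ v, ψ (f v) = 0 := by
  obtain ⟨c, hc⟩ := AddChar.ne_zero_iff.1 hψ
  obtain ⟨v, rfl⟩ := LinearMap.surjective_of_ne_zero hf c
  exact AddChar.sum_eq_zero_iff_ne_zero.2
    (AddChar.ne_zero_iff.2 ⟨v, hc⟩ : ψ.compAddMonoidHom f.toAddMonoidHom ≠ 0)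

namespace LinearMap.BilinForm

variable {k M : Type*} [Field k] [AddCommGroup M] [Module k M] {ω : LinearMap.BilinForm k M}
  {N L : Submodule k M}

theorem apply_eq_zero_of_orthogonal_eq_self (hN : ω.orthogonal N = N) {x y : M} (hx : x ∈ N)
    (hy : y ∈ N) : ω x y = 0 :=
  (hN.symm ▸ hy : y ∈ ω.orthogonal N) x hx

theorem isCompl_of_orthogonal_eq_self [FiniteDimensional k M] (hω : ω.IsRefl)
    (hN : ω.orthogonal N = N) (hL : ω.orthogonal L = L) (hNL : N ⊓ L = ⊥) : IsCompl N L := by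
  have orthogonal_eq_bot : ∀ P, N ≤ P → L ≤ P → ω.orthogonal P = ⊥ := fun P hNP hLP =>
    eq_bot_iff.2 <| hNL ▸ le_inf (hN ▸ orthogonal_le hNP) (hL ▸ orthogonal_le hLP)
  have hdim := finrank_add_finrank_orthogonal hω (N ⊔ L)
  rw [orthogonal_eq_bot _ le_sup_left le_sup_right, orthogonal_eq_bot ⊤ le_top le_top,
    inf_bot_eq, finrank_bot, add_zero, add_zero] at hdim
  exact ⟨disjoint_iff.2 hNL, codisjoint_iff.2 (Submodule.eq_top_of_finrank_eq hdim)⟩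

theorem exists_apply_ne_zero_of_orthogonal_eq_self (hL : ω.orthogonal L = L)
    (hNL : N ⊓ L = ⊥) {n : M} (hn : n ∈ N) (hn0 : n ≠ 0) : ∃ l ∈ L, ω l n ≠ 0 := by
  by_contra! h
  exact hn0 <| (Submodule.mem_bot k).1 <| hNL ▸ ⟨hn, hL ▸ fun l hl => h l hl⟩

end LinearMap.BilinForm

section Heisenberg

variable {k M R : Type*} [Field k] [AddCommGroup M] [Module k M] [Monoid R]
  (ω : M →ₗ[k] M →ₗ[k] k) (ψ : AddChar k R)

theorem apply_add_of_apply_Hmul {P Q : Set M} {F : M × k → R}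
    (hF : ∀ x ∈ P, ∀ y ∈ Q, ∀ a b : k, F (Hmul ω (x, a) (y, b)) = ψ a * ψ b)
    {x y : M} (hx : x ∈ P) (hy : y ∈ Q) (c : k) : F (x + y, c) = ψ (c - 2⁻¹ * ω x y) := by
  simpa [Hmul] using hF x hx y hy (c - 2⁻¹ * ω x y) 0

theorem Hmul_add_Hinv_add (n₀ l₀ n l : M) (a b : k) :
    Hmul ω (n₀ + l₀, a) (Hinv (n + l, b))
      = ((l₀ - l) + (n₀ - n), a - b - 2⁻¹ * ω (n₀ + l₀) (n + l)) := by
  simp only [Hmul, Hinv, map_neg, Prod.mk.injEq]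
  constructor
  · abel
  · ring

variable {ω} {N L : Submodule k M} {FNL FLN : M × k → R}

theorem apply_Hmul_Hinv_mul_apply_eq (hω : ω.IsAlt) (h2 : (2 : k) ≠ 0)
    (hN : orthogonal ω N = N) (hL : orthogonal ω L = L)
    (hFNL : ∀ n ∈ N, ∀ l ∈ L, ∀ a b : k, FNL (Hmul ω (n, a) (l, b)) = ψ a * ψ b)
    (hFLN : ∀ l ∈ L, ∀ n ∈ N, ∀ a b : k, FLN (Hmul ω (l, a) (n, b)) = ψ a * ψ b)
    {n₀ n l₀ l : M} (hn₀ : n₀ ∈ N) (hn : n ∈ N) (hl₀ : l₀ ∈ L) (hl : l ∈ L) (a b : k) :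
    FLN (Hmul ω (n₀ + l₀, a) (Hinv (n + l, b))) * FNL (n + l, b)
      = ψ (a + 2⁻¹ * ω n₀ l₀) * ψ (ω l n₀) := by
  rw [Hmul_add_Hinv_add, apply_add_of_apply_Hmul ω ψ hFLN (sub_mem hl₀ hl) (sub_mem hn₀ hn),
    apply_add_of_apply_Hmul ω ψ hFNL hn hl, ← AddChar.map_add_eq_mul,
    ← AddChar.map_add_eq_mul]
  congr 1
  have hnn := apply_eq_zero_of_orthogonal_eq_self hN hn₀ hn
  have hll := apply_eq_zero_of_orthogonal_eq_self hL hl₀ hl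
  have h₁ := hω.neg n₀ l₀
  have h₂ := hω.neg n₀ l
  have h₃ := hω.neg n l
  have hhalf : (2 : k)⁻¹ * 2 = 1 := inv_mul_cancel₀ h2
  simp only [map_add, map_sub, LinearMap.add_apply, LinearMap.sub_apply]
  linear_combination (-2⁻¹ : k) * hnn - 2⁻¹ * hll + 2⁻¹ * h₁ + 2⁻¹ * h₂ + 2⁻¹ * h₃
    + ω l n₀ * hhalf

end Heisenberg

section Convolution

variable {k M R : Type*} [Field k] [Fintype k] [AddCommGroup M] [Module k M] [Fintype M]
  [CommSemiring R] {ω : M →ₗ[k] M →ₗ[k] k} (ψ : AddChar k R) {N L : Submodule k M}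
  [Fintype N] [Fintype L] {FNL FLN : M × k → R}

theorem sum_apply_Hmul_Hinv_mul_apply_eq (hω : ω.IsAlt) (h2 : (2 : k) ≠ 0)
    (hN : orthogonal ω N = N) (hL : orthogonal ω L = L)
    (hcompl : IsCompl N L)
    (hFNL : ∀ n ∈ N, ∀ l ∈ L, ∀ a b : k, FNL (Hmul ω (n, a) (l, b)) = ψ a * ψ b)
    (hFLN : ∀ l ∈ L, ∀ n ∈ N, ∀ a b : k, FLN (Hmul ω (l, a) (n, b)) = ψ a * ψ b)
    {n₀ l₀ : M} (hn₀ : n₀ ∈ N) (hl₀ : l₀ ∈ L) (a : k) :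
    ∑ v, FLN (Hmul ω (n₀ + l₀, a) (Hinv v)) * FNL v
      = Fintype.card N * Fintype.card k * ψ (a + 2⁻¹ * ω n₀ l₀) * ∑ l : L, ψ (ω l n₀) := by
  rw [← ((Submodule.prodEquivOfIsCompl N L hcompl).toEquiv.prodCongr (Equiv.refl k)).sum_comp]
  simp only [Fintype.sum_prod_type, Equiv.prodCongr_apply, Prod.map, LinearEquiv.coe_toEquiv,
    Submodule.coe_prodEquivOfIsCompl', Equiv.refl_apply,
    apply_Hmul_Hinv_mul_apply_eq ψ hω h2 hN hL hFNL hFLN hn₀ _ hl₀ _, SetLike.coe_mem]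
  simp [Finset.mul_sum, mul_assoc]

end Convolution

theorem statement4_general {k M : Type*} [Field k] [Fintype k]
    [AddCommGroup M] [Module k M] [Fintype M]
    (hchar : ringChar k ≠ 2) (d : ℕ)
    (hdim : Module.finrank k M = 2 * d)
    (ω : M →ₗ[k] M →ₗ[k] k)
    (halt : ∀ m : M, ω m m = 0)
    (ψ : AddChar k ℂ) (hψ : ∃ a : k, ψ a ≠ 1)
    (N L : Submodule k M)
    (hN : LinearMap.BilinForm.orthogonal ω N = N)
    (hL : LinearMap.BilinForm.orthogonal ω L = L)
    (hNL : N ⊓ L = ⊥)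
    (FNL FLN FLL : M × k → ℂ)
    -- F̃_{N,L} equals χ_N ⊗ χ_L on N̄·L̄ and vanishes elsewhere
    (hFNL : ∀ n ∈ N, ∀ l ∈ L, ∀ aₙ aₗ : k,
      FNL (Hmul ω (n, aₙ) (l, aₗ)) = ψ aₙ * ψ aₗ)
    (hFLN : ∀ l ∈ L, ∀ n ∈ N, ∀ aₗ aₙ : k,
      FLN (Hmul ω (l, aₗ) (n, aₙ)) = ψ aₗ * ψ aₙ)
    (hFLL : ∀ l ∈ L, ∀ a : k, FLL (l, a) = ψ a)
    (hFLL0 : ∀ h : M × k, h.1 ∉ L → FLL h = 0) :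
    ∀ h : M × k,
      (∑ v : M × k, FLN (Hmul ω h (Hinv v)) * FNL v)
        = (Fintype.card k : ℂ) ^ (2 * d + 1) * FLL h := by
  classical
  have hω : ω.IsAlt := halt
  have hcompl : IsCompl N L := isCompl_of_orthogonal_eq_self hω.isRefl hN hL hNL
  rintro ⟨m, a⟩
  obtain ⟨n₀, hn₀, l₀, hl₀, rfl⟩ := Submodule.mem_sup.1
    (show m ∈ N ⊔ L from hcompl.sup_eq_top ▸ Submodule.mem_top)
  rw [sum_apply_Hmul_Hinv_mul_apply_eq ψ hω (Ring.two_ne_zero hchar) hN hL hcompl hFNL hFLN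
    hn₀ hl₀ a]
  rcases eq_or_ne n₀ 0 with rfl | hn₀0
  · have hcard : Fintype.card N * Fintype.card L = Fintype.card k ^ (2 * d) := by
      rw [← Fintype.card_prod,
        Fintype.card_congr (Submodule.prodEquivOfIsCompl N L hcompl).toEquiv,
        Module.card_eq_pow_finrank (K := k), hdim]
    simp only [zero_add, map_zero, LinearMap.zero_apply, mul_zero, add_zero,
      AddChar.map_zero_eq_one, Finset.sum_const, Finset.card_univ, nsmul_eq_mul, mul_one,
      hFLL l₀ hl₀ a]
    rw [pow_succ, ← Nat.cast_pow, ← hcard]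
    push_cast
    ring
  · obtain ⟨l, hl, hl0⟩ := exists_apply_ne_zero_of_orthogonal_eq_self hL hNL hn₀ hn₀0
    have hsum : ∑ l : L, ψ (ω l n₀) = 0 :=
      AddChar.sum_apply_linearMap_eq_zero (AddChar.ne_zero_iff.2 hψ)
        (f := (ω.flip n₀).domRestrict L) fun h => hl0 (LinearMap.congr_fun h ⟨l, hl⟩)
    have hnotin : n₀ + l₀ ∉ L := fun h =>
      hn₀0 (Submodule.disjoint_def.1 hcompl.disjoint n₀ hn₀ ((L.add_mem_iff_left hl₀).1 h))
    rw [hsum, hFLL0 _ hnotin, mul_zero, mul_zero]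

theorem statement4 {k M : Type*} [Field k] [Fintype k]
    [AddCommGroup M] [Module k M] [Fintype M]
    (hchar : ringChar k ≠ 2) (d : ℕ)
    (hdim : Module.finrank k M = 2 * d)
    (ω : M →ₗ[k] M →ₗ[k] k)
    (halt : ∀ m : M, ω m m = 0)
    (hnd : ∀ m : M, (∀ m' : M, ω m m' = 0) → m = 0)
    (ψ : AddChar k ℂ) (hψ : ∃ a : k, ψ a ≠ 1)
    (N L : Submodule k M)
    (hN : LinearMap.BilinForm.orthogonal ω N = N)
    (hL : LinearMap.BilinForm.orthogonal ω L = L)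
    (hNL : N ⊓ L = ⊥)
    (FNL FLN FLL : M × k → ℂ)
    -- F̃_{N,L} equals χ_N ⊗ χ_L on N̄·L̄ and vanishes elsewhere
    (hFNL : ∀ n ∈ N, ∀ l ∈ L, ∀ aₙ aₗ : k,
      FNL (Hmul ω (n, aₙ) (l, aₗ)) = ψ aₙ * ψ aₗ)
    (hFNL0 : ∀ h : M × k,
      (¬ ∃ n ∈ N, ∃ l ∈ L, ∃ aₙ aₗ : k, h = Hmul ω (n, aₙ) (l, aₗ)) → FNL h = 0)
    (hFLN : ∀ l ∈ L, ∀ n ∈ N, ∀ aₗ aₙ : k,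
      FLN (Hmul ω (l, aₗ) (n, aₙ)) = ψ aₗ * ψ aₙ)
    (hFLN0 : ∀ h : M × k,
      (¬ ∃ l ∈ L, ∃ n ∈ N, ∃ aₗ aₙ : k, h = Hmul ω (l, aₗ) (n, aₙ)) → FLN h = 0)
    (hFLL : ∀ l ∈ L, ∀ a : k, FLL (l, a) = ψ a)
    (hFLL0 : ∀ h : M × k, h.1 ∉ L → FLL h = 0) :
    ∀ h : M × k,
      (∑ v : M × k, FLN (Hmul ω h (Hinv v)) * FNL v)
        = (Fintype.card k : ℂ) ^ (2 * d + 1) * FLL h :=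
  statement4_general hchar d hdim ω halt ψ hψ N L hN hL hNL FNL FLN FLL hFNL hFLN hFLL hFLL0
end

section
/- With the setup of the previous statement, let $L, R, N$ be lagrangian subspaces of $M$ with $N \cap L = N \cap R = 0$, and let $b: L \to N$ be the unique map with $R = \{l + b(l) : l \in L\}$. Define $\theta(R, N, L) = \sum_{l \in L} \psi(\tfrac12 \omega\langle l, b(l)\rangle)$. Then $\tilde F_{R,N} * \tilde F_{N,L} = q^{d+1}\, \theta(R,N,L)\, \tilde F_{R,L}$. -/
open LinearMap (BilinForm)

namespace LinearMap

variable {k V : Type*} [Field k] [AddCommGroup V] [Module k V]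

theorem range_eq_dualAnnihilator_ker_of_symm [FiniteDimensional k V]
    (g : V →ₗ[k] Module.Dual k V) (hg : ∀ x y, g x y = g y x) :
    range g = (ker g).dualAnnihilator := by
  have hdual : g = g.dualMap ∘ₗ (Module.evalEquiv k V).toLinearMap := by
    ext x y
    simp [hg]
  have hrange : range g = range g.dualMap := by
    conv_lhs => rw [hdual]
    exact range_comp_of_range_eq_top _ (LinearEquiv.range _)
  rw [hrange, range_dualMap_eq_dualAnnihilator_ker]

end LinearMap

section Symplectic

variable {k M : Type*} [Field k] [AddCommGroup M] [Module k M] {ω : M →ₗ[k] M →ₗ[k] k}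

theorem apply_eq_zero_of_le_orthogonal {W : Submodule k M}
    (hW : W ≤ BilinForm.orthogonal ω W) {x y : M} (hx : x ∈ W) (hy : y ∈ W) :
    ω x y = 0 :=
  hW hy x hx

theorem finrank_eq_of_orthogonal_eq_self [FiniteDimensional k M] (hω : ω.Nondegenerate)
    {W : Submodule k M} (hW : BilinForm.orthogonal ω W = W) :
    2 * Module.finrank k W = Module.finrank k M := by
  have h := BilinForm.finrank_orthogonal hω W
  rw [hW] at h
  have := Submodule.finrank_le W
  omega

theorem isCompl_of_orthogonal_eq_self [FiniteDimensional k M] (hω : ω.Nondegenerate)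
    {N L : Submodule k M} (hN : BilinForm.orthogonal ω N = N)
    (hL : BilinForm.orthogonal ω L = L) (hNL : N ⊓ L = ⊥) : IsCompl N L := by
  have := finrank_eq_of_orthogonal_eq_self hω hN
  have := finrank_eq_of_orthogonal_eq_self hω hL
  exact (Submodule.isCompl_iff_disjoint N L (by omega)).2 (disjoint_iff.2 hNL)

theorem apply_graph_comm (hω : ω.IsAlt) {L N R : Submodule k M}
    (hL : L ≤ BilinForm.orthogonal ω L) (hN : N ≤ BilinForm.orthogonal ω N)
    (hR : R ≤ BilinForm.orthogonal ω R) {b : L →ₗ[k] M} (hbN : ∀ l, b l ∈ N)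
    (hgraph : ∀ l : L, ↑l + b l ∈ R) (l₁ l₂ : L) : ω l₁ (b l₂) = ω l₂ (b l₁) := by
  have h := apply_eq_zero_of_le_orthogonal hR (hgraph l₁) (hgraph l₂)
  simp only [map_add, LinearMap.add_apply, apply_eq_zero_of_le_orthogonal hL l₁.2 l₂.2,
    apply_eq_zero_of_le_orthogonal hN (hbN l₁) (hbN l₂)] at h
  linear_combination h + hω.neg l₂ (b l₁)

/-- `ω` embeds the isotropic `N` into the dual of `L`, and through this embedding `b` becomes a
symmetric map `L → L^*`, whose range is the annihilator of its kernel. -/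
theorem exists_apply_eq_of_forall_ker (hω : ω.IsAlt) (hnd : ω.SeparatingLeft)
    {L N : Submodule k M} [FiniteDimensional k L] (hN : N ≤ BilinForm.orthogonal ω N)
    (hNL : N ⊔ L = ⊤) {b : L →ₗ[k] M} (hbN : ∀ l, b l ∈ N)
    (hsymm : ∀ l₁ l₂ : L, ω l₁ (b l₂) = ω l₂ (b l₁)) {n : M} (hn : n ∈ N)
    (hker : ∀ t : L, b t = 0 → ω n t = 0) : ∃ l : L, b l = n := by
  let J : M →ₗ[k] Module.Dual k L := L.subtype.dualMap ∘ₗ ω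
  have hJ : ∀ x ∈ N, J x = 0 → x = 0 := by
    intro x hx hJx
    refine hnd x fun y => ?_
    obtain ⟨y₁, hy₁, y₂, hy₂, rfl⟩ := Submodule.mem_sup.1 (hNL ▸ Submodule.mem_top : y ∈ N ⊔ L)
    rw [map_add, apply_eq_zero_of_le_orthogonal hN hx hy₁, zero_add]
    exact LinearMap.congr_fun hJx ⟨y₂, hy₂⟩
  have hg : ∀ x y : L, (J ∘ₗ b) x y = (J ∘ₗ b) y x := by
    intro x y
    simp only [J, LinearMap.comp_apply, LinearMap.dualMap_apply, Submodule.subtype_apply]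
    rw [← hω.neg y (b x), ← hω.neg x (b y), hsymm]
  have hJn : J n ∈ LinearMap.range (J ∘ₗ b) := by
    rw [LinearMap.range_eq_dualAnnihilator_ker_of_symm _ hg, Submodule.mem_dualAnnihilator]
    exact fun t ht => hker t (hJ _ (hbN t) ht)
  obtain ⟨l, hl⟩ := hJn
  refine ⟨l, (sub_eq_zero.1 (hJ _ (N.sub_mem hn (hbN l)) ?_)).symm⟩
  rw [map_sub, ← hl, LinearMap.comp_apply, sub_self]

end Symplectic

theorem Fintype.sum_eq_zero_of_add_right_eq_mul {G R : Type*} [AddGroup G] [Fintype G]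
    [CommRing R] [IsDomain R] {f : G → R} {t : G} {z : R} (hz : z ≠ 1)
    (h : ∀ u, f (u + t) = z * f u) : ∑ u, f u = 0 := by
  have hs : ∑ u, f u = z * ∑ u, f u := by
    rw [Finset.mul_sum]
    exact Fintype.sum_equiv (Equiv.subRight t) _ _ fun u => by simpa using h (u - t)
  have : (1 - z) * ∑ u, f u = 0 := by rw [sub_mul, one_mul, ← hs, sub_self]
  exact (mul_eq_zero.1 this).resolve_left (sub_ne_zero.2 hz.symm)

section Heisenberg

variable {k M : Type*} [Field k] [AddCommGroup M] [Module k M] (ω : M →ₗ[k] M →ₗ[k] k)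
  (ψ : AddChar k ℂ)

theorem apply_add_of_mem {A B : Submodule k M} {F : M × k → ℂ}
    (hF : ∀ a ∈ A, ∀ b ∈ B, ∀ a₁ a₂ : k, F (Hmul ω (a, a₁) (b, a₂)) = ψ a₁ * ψ a₂)
    {x y : M} (hx : x ∈ A) (hy : y ∈ B) (c : k) : F (x + y, c) = ψ (c - 2⁻¹ * ω x y) := by
  have h : ((x + y, c) : M × k) = Hmul ω (x, c - 2⁻¹ * ω x y) (y, 0) := by
    simp [Hmul]
  rw [h, hF x hx y hy, AddChar.map_zero_eq_one, mul_one]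

/-- `θ(R, N, L)` is `thetaSum ω ψ b 0`. -/
def thetaSum {L : Submodule k M} [Fintype L] (b : L →ₗ[k] M) (n : M) : ℂ :=
  ∑ l : L, ψ (ω n l + 2⁻¹ * ω l (b l))

variable {ω} {L : Submodule k M} [Fintype L] {b : L →ₗ[k] M}

/-- Completing the square. -/
theorem thetaSum_eq_mul_thetaSum_zero (h2 : (2 : k) ≠ 0) (hω : ω.IsAlt)
    (hsymm : ∀ l₁ l₂ : L, ω l₁ (b l₂) = ω l₂ (b l₁)) (l₀ : L) :
    thetaSum ω ψ b (b l₀) = ψ (-(2⁻¹ * ω l₀ (b l₀))) * thetaSum ω ψ b 0 := by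
  rw [thetaSum, thetaSum, Finset.mul_sum]
  refine Fintype.sum_equiv (Equiv.subRight l₀) _ _ fun u => ?_
  rw [← AddChar.map_add_eq_mul]
  congr 1
  simp only [Equiv.subRight_apply, Submodule.coe_sub, map_sub, map_zero, LinearMap.zero_apply,
    LinearMap.sub_apply, ← hω.neg u (b l₀), hsymm u l₀]
  field_simp
  ring

theorem thetaSum_eq_zero (hsymm : ∀ l₁ l₂ : L, ω l₁ (b l₂) = ω l₂ (b l₁)) {a : k}
    (ha : ψ a ≠ 1) {n : M} {t : L} (hbt : b t = 0) (hnt : ω n t ≠ 0) :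
    thetaSum ω ψ b n = 0 := by
  refine Fintype.sum_eq_zero_of_add_right_eq_mul ha (t := (a / ω n t) • t) fun u => ?_
  rw [← AddChar.map_add_eq_mul]
  congr 1
  simp only [map_add, map_smul, smul_zero, add_zero, Submodule.coe_add, Submodule.coe_smul,
    LinearMap.add_apply, LinearMap.smul_apply, smul_eq_mul, ← hsymm u t, hbt, map_zero]
  field_simp
  ring

theorem thetaSum_eq_zero_of_forall_ne (hω : ω.IsAlt) (hnd : ω.SeparatingLeft) {N : Submodule k M}
    (hN : N ≤ BilinForm.orthogonal ω N) (hNL : N ⊔ L = ⊤) (hbN : ∀ l, b l ∈ N)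
    (hsymm : ∀ l₁ l₂ : L, ω l₁ (b l₂) = ω l₂ (b l₁)) {a : k} (ha : ψ a ≠ 1) {n : M} (hn : n ∈ N)
    (hne : ∀ l, b l ≠ n) : thetaSum ω ψ b n = 0 := by
  obtain ⟨t, hbt, hnt⟩ : ∃ t : L, b t = 0 ∧ ω n t ≠ 0 := by
    by_contra! h
    obtain ⟨l, hl⟩ := exists_apply_eq_of_forall_ker hω hnd hN hNL hbN hsymm hn h
    exact hne l hl
  exact thetaSum_eq_zero ψ hsymm ha hbt hnt

end Heisenberg

section Convolution

variable {k M : Type*} [Field k] [AddCommGroup M] [Module k M] {ω : M →ₗ[k] M →ₗ[k] k}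
  {ψ : AddChar k ℂ} {N L R : Submodule k M} {b : L →ₗ[k] M} {FRN FNL : M × k → ℂ}

theorem apply_mul_apply_add (h2 : (2 : k) ≠ 0) (hω : ω.IsAlt)
    (hN : N ≤ BilinForm.orthogonal ω N) (hL : L ≤ BilinForm.orthogonal ω L)
    (hbN : ∀ l, b l ∈ N) (hgraph : ∀ l : L, ↑l + b l ∈ R)
    (hFRN : ∀ r ∈ R, ∀ n ∈ N, ∀ a₁ a₂ : k, FRN (Hmul ω (r, a₁) (n, a₂)) = ψ a₁ * ψ a₂)
    (hFNL : ∀ n ∈ N, ∀ l ∈ L, ∀ a₁ a₂ : k, FNL (Hmul ω (n, a₁) (l, a₂)) = ψ a₁ * ψ a₂)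
    (n n' : N) (l l' : L) (c a : k) :
    FRN (Hmul ω (↑n + ↑l, c) (Hinv (↑n' + ↑l', a))) * FNL (↑n' + ↑l', a)
      = ψ (c - 2⁻¹ * ω n l) * ψ (ω n ↑(l - l') + 2⁻¹ * ω ↑(l - l') (b (l - l'))) := by
  set u := l - l'
  have hprod : Hmul ω (↑n + ↑l, c) (Hinv (↑n' + ↑l', a))
      = ((↑u + b u) + (↑n - ↑n' - b u), c - a - 2⁻¹ * ω (↑n + ↑l) (↑n' + ↑l')) := by
    ext
    · simp only [Hmul, Hinv, u, Submodule.coe_sub]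
      abel
    · simp only [Hmul, Hinv, map_neg]
      ring
  rw [hprod, apply_add_of_mem ω ψ hFRN (hgraph u) (N.sub_mem (N.sub_mem n.2 n'.2) (hbN u)),
    apply_add_of_mem ω ψ hFNL n'.2 l'.2, ← AddChar.map_add_eq_mul, ← AddChar.map_add_eq_mul]
  congr 1
  simp only [u, Submodule.coe_sub, map_add, map_sub, LinearMap.add_apply, LinearMap.sub_apply,
    apply_eq_zero_of_le_orthogonal hN, apply_eq_zero_of_le_orthogonal hL, SetLike.coe_mem, hbN]
  rw [← hω.neg (n : M) l, ← hω.neg (n : M) l', ← hω.neg (n' : M) l, ← hω.neg (n' : M) l']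
  field_simp
  ring

theorem sum_apply_mul_apply_add [Fintype k] [Fintype M] [Fintype N] [Fintype L]
    (h2 : (2 : k) ≠ 0) (hω : ω.IsAlt) (hcompl : IsCompl N L)
    (hN : N ≤ BilinForm.orthogonal ω N) (hL : L ≤ BilinForm.orthogonal ω L)
    (hbN : ∀ l, b l ∈ N) (hgraph : ∀ l : L, ↑l + b l ∈ R)
    (hFRN : ∀ r ∈ R, ∀ n ∈ N, ∀ a₁ a₂ : k, FRN (Hmul ω (r, a₁) (n, a₂)) = ψ a₁ * ψ a₂)
    (hFNL : ∀ n ∈ N, ∀ l ∈ L, ∀ a₁ a₂ : k, FNL (Hmul ω (n, a₁) (l, a₂)) = ψ a₁ * ψ a₂)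
    (n : N) (l : L) (c : k) :
    ∑ v : M × k, FRN (Hmul ω (↑n + ↑l, c) (Hinv v)) * FNL v
      = Fintype.card k * Fintype.card N * ψ (c - 2⁻¹ * ω n l) * thetaSum ω ψ b n := by
  let g : L → ℂ := fun u => ψ (ω n u + 2⁻¹ * ω u (b u))
  have hshift : ∑ l' : L, g (l - l') = thetaSum ω ψ b n :=
    Fintype.sum_equiv (Equiv.subLeft l) _ g fun _ => rfl
  calc ∑ v : M × k, FRN (Hmul ω (↑n + ↑l, c) (Hinv v)) * FNL v
      = ∑ p : N × L, ∑ a : k,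
          FRN (Hmul ω (↑n + ↑l, c) (Hinv (↑p.1 + ↑p.2, a))) * FNL (↑p.1 + ↑p.2, a) := by
        rw [Fintype.sum_prod_type, ← (N.prodEquivOfIsCompl L hcompl).toEquiv.sum_comp]
        rfl
    _ = ∑ p : N × L, ∑ _a : k, ψ (c - 2⁻¹ * ω n l) * g (l - p.2) := by
        simp only [apply_mul_apply_add h2 hω hN hL hbN hgraph hFRN hFNL, g]
    _ = Fintype.card k * Fintype.card N * ψ (c - 2⁻¹ * ω n l) * thetaSum ω ψ b n := by
        simp only [Finset.sum_const, Finset.card_univ, nsmul_eq_mul, Fintype.sum_prod_type,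
          ← Finset.mul_sum, hshift]
        ring

theorem apply_graph_add {FRL : M × k → ℂ} (hω : ω.IsAlt) (hL : L ≤ BilinForm.orthogonal ω L)
    (hgraph : ∀ l : L, ↑l + b l ∈ R)
    (hFRL : ∀ r ∈ R, ∀ l ∈ L, ∀ a₁ a₂ : k, FRL (Hmul ω (r, a₁) (l, a₂)) = ψ a₁ * ψ a₂)
    (l₀ l : L) (c : k) :
    FRL (b l₀ + ↑l, c) = ψ (c - 2⁻¹ * ω (b l₀) l) * ψ (-(2⁻¹ * ω l₀ (b l₀))) := by
  have h : b l₀ + ↑l = (↑l₀ + b l₀) + ↑(l - l₀) := by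
    rw [Submodule.coe_sub]
    abel
  rw [h, apply_add_of_mem ω ψ hFRL (hgraph l₀) (l - l₀).2, ← AddChar.map_add_eq_mul]
  congr 1
  simp only [Submodule.coe_sub, map_add, map_sub, LinearMap.add_apply,
    apply_eq_zero_of_le_orthogonal hL, SetLike.coe_mem, ← hω.neg (l₀ : M) (b l₀)]
  ring

theorem apply_eq_zero_of_forall_ne {FRL : M × k → ℂ} (hNL : N ⊓ L = ⊥) (hbN : ∀ l, b l ∈ N)
    (hgraph : ∀ x : M, x ∈ R ↔ ∃ l : L, x = ↑l + b l)
    (hFRL0 : ∀ h : M × k,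
      (¬ ∃ r ∈ R, ∃ l ∈ L, ∃ a₁ a₂ : k, h = Hmul ω (r, a₁) (l, a₂)) → FRL h = 0)
    {n : M} (hn : n ∈ N) (hne : ∀ l₀, b l₀ ≠ n) (l : L) (c : k) : FRL (n + l, c) = 0 := by
  refine hFRL0 _ ?_
  rintro ⟨r, hr, l', hl', a₁, a₂, heq⟩
  obtain ⟨l₀, rfl⟩ := (hgraph r).1 hr
  have hsum : n + ↑l = ↑l₀ + b l₀ + l' := congrArg Prod.fst heq
  have hmem : b l₀ - n ∈ N ⊓ L := by
    refine ⟨N.sub_mem (hbN l₀) hn, ?_⟩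
    rw [show b l₀ - n = ↑l - ↑l₀ - l' by linear_combination (norm := module) -hsum]
    exact L.sub_mem (L.sub_mem l.2 l₀.2) hl'
  rw [hNL, Submodule.mem_bot, sub_eq_zero] at hmem
  exact hne l₀ hmem

end Convolution

theorem statement5_general {k M : Type*} [Field k] [Fintype k]
    [AddCommGroup M] [Module k M] [Fintype M]
    (hchar : ringChar k ≠ 2) (d : ℕ)
    (hdim : Module.finrank k M = 2 * d)
    (ω : M →ₗ[k] M →ₗ[k] k)
    (halt : ∀ m : M, ω m m = 0)
    (hnd : ∀ m : M, (∀ m' : M, ω m m' = 0) → m = 0)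
    (ψ : AddChar k ℂ) (hψ : ∃ a : k, ψ a ≠ 1)
    (L R N : Submodule k M) [Fintype L]
    (hL : LinearMap.BilinForm.orthogonal ω L = L)
    (hR : LinearMap.BilinForm.orthogonal ω R = R)
    (hN : LinearMap.BilinForm.orthogonal ω N = N)
    (hNL : N ⊓ L = ⊥)
    (b : ↥L →ₗ[k] M) (hbN : ∀ l : ↥L, b l ∈ N)
    (hgraph : ∀ x : M, x ∈ R ↔ ∃ l : ↥L, x = ↑l + b l)
    (FRN FNL FRL : M × k → ℂ)
    (hFRN : ∀ r ∈ R, ∀ n ∈ N, ∀ a₁ a₂ : k,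
      FRN (Hmul ω (r, a₁) (n, a₂)) = ψ a₁ * ψ a₂)
    (hFNL : ∀ n ∈ N, ∀ l ∈ L, ∀ a₁ a₂ : k,
      FNL (Hmul ω (n, a₁) (l, a₂)) = ψ a₁ * ψ a₂)
    (hFRL : ∀ r ∈ R, ∀ l ∈ L, ∀ a₁ a₂ : k,
      FRL (Hmul ω (r, a₁) (l, a₂)) = ψ a₁ * ψ a₂)
    (hFRL0 : ∀ h : M × k,
      (¬ ∃ r ∈ R, ∃ l ∈ L, ∃ a₁ a₂ : k, h = Hmul ω (r, a₁) (l, a₂)) → FRL h = 0) :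
    ∀ h : M × k,
      (∑ v : M × k, FRN (Hmul ω h (Hinv v)) * FNL v)
        = (Fintype.card k : ℂ) ^ (d + 1) *
            (∑ l : ↥L, ψ (2⁻¹ * ω ↑l (b l))) * FRL h := by
  rintro ⟨m, c⟩
  have : Fintype N := Fintype.ofFinite N
  have h2 : (2 : k) ≠ 0 := Ring.two_ne_zero hchar
  have hω : ω.IsAlt := halt
  have hnd' : ω.Nondegenerate := hω.isRefl.nondegenerate_iff_separatingLeft.2 hnd
  have hdN : Module.finrank k N = d := by
    have := finrank_eq_of_orthogonal_eq_self hnd' hN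
    omega
  have hcompl := isCompl_of_orthogonal_eq_self hnd' hN hL hNL
  have hgraph' : ∀ l : L, ↑l + b l ∈ R := fun l => (hgraph _).2 ⟨l, rfl⟩
  have hsymm := apply_graph_comm hω hL.ge hN.ge hR.ge hbN hgraph'
  obtain ⟨⟨n, l⟩, rfl⟩ := (N.prodEquivOfIsCompl L hcompl).surjective m
  have hθ : thetaSum ω ψ b 0 = ∑ l : L, ψ (2⁻¹ * ω l (b l)) := by
    simp only [thetaSum, map_zero, LinearMap.zero_apply, zero_add]
  rw [Submodule.coe_prodEquivOfIsCompl',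
    sum_apply_mul_apply_add h2 hω hcompl hN.ge hL.ge hbN hgraph' hFRN hFNL,
    Module.card_eq_pow_finrank (K := k) (V := N), hdN, ← hθ]
  by_cases hn : ∃ l₀, b l₀ = n
  · obtain ⟨l₀, hl₀⟩ := hn
    rw [← hl₀, thetaSum_eq_mul_thetaSum_zero ψ h2 hω hsymm,
      apply_graph_add hω hL.ge hgraph' hFRL]
    push_cast
    ring
  · obtain ⟨a, ha⟩ := hψ
    rw [thetaSum_eq_zero_of_forall_ne ψ hω hnd hN.ge hcompl.sup_eq_top hbN hsymm ha n.2
      (not_exists.1 hn), apply_eq_zero_of_forall_ne hNL hbN hgraph hFRL0 n.2 (not_exists.1 hn)]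
    ring

theorem statement5 {k M : Type*} [Field k] [Fintype k]
    [AddCommGroup M] [Module k M] [Fintype M]
    (hchar : ringChar k ≠ 2) (d : ℕ)
    (hdim : Module.finrank k M = 2 * d)
    (ω : M →ₗ[k] M →ₗ[k] k)
    (halt : ∀ m : M, ω m m = 0)
    (hnd : ∀ m : M, (∀ m' : M, ω m m' = 0) → m = 0)
    (ψ : AddChar k ℂ) (hψ : ∃ a : k, ψ a ≠ 1)
    (L R N : Submodule k M) [Fintype L]
    (hL : LinearMap.BilinForm.orthogonal ω L = L)
    (hR : LinearMap.BilinForm.orthogonal ω R = R)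
    (hN : LinearMap.BilinForm.orthogonal ω N = N)
    (hNL : N ⊓ L = ⊥) (hNR : N ⊓ R = ⊥)
    (b : ↥L →ₗ[k] M) (hbN : ∀ l : ↥L, b l ∈ N)
    (hgraph : ∀ x : M, x ∈ R ↔ ∃ l : ↥L, x = ↑l + b l)
    (FRN FNL FRL : M × k → ℂ)
    (hFRN : ∀ r ∈ R, ∀ n ∈ N, ∀ a₁ a₂ : k,
      FRN (Hmul ω (r, a₁) (n, a₂)) = ψ a₁ * ψ a₂)
    (hFRN0 : ∀ h : M × k,
      (¬ ∃ r ∈ R, ∃ n ∈ N, ∃ a₁ a₂ : k, h = Hmul ω (r, a₁) (n, a₂)) → FRN h = 0)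
    (hFNL : ∀ n ∈ N, ∀ l ∈ L, ∀ a₁ a₂ : k,
      FNL (Hmul ω (n, a₁) (l, a₂)) = ψ a₁ * ψ a₂)
    (hFNL0 : ∀ h : M × k,
      (¬ ∃ n ∈ N, ∃ l ∈ L, ∃ a₁ a₂ : k, h = Hmul ω (n, a₁) (l, a₂)) → FNL h = 0)
    (hFRL : ∀ r ∈ R, ∀ l ∈ L, ∀ a₁ a₂ : k,
      FRL (Hmul ω (r, a₁) (l, a₂)) = ψ a₁ * ψ a₂)
    (hFRL0 : ∀ h : M × k,
      (¬ ∃ r ∈ R, ∃ l ∈ L, ∃ a₁ a₂ : k, h = Hmul ω (r, a₁) (l, a₂)) → FRL h = 0) :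
    ∀ h : M × k,
      (∑ v : M × k, FRN (Hmul ω h (Hinv v)) * FNL v)
        = (Fintype.card k : ℂ) ^ (d + 1) *
            (∑ l : ↥L, ψ (2⁻¹ * ω ↑l (b l))) * FRL h :=
  statement5_general hchar d hdim ω halt hnd ψ hψ L R N hL hR hN hNL b hbN hgraph FRN FNL FRL hFRN
    hFNL hFRL hFRL0
end

section
/- Let $M$ be a $2d$-dimensional symplectic space over $\mathbb{F}_q$ ($q$ odd), $V \subset M$ isotropic, $L$ a lagrangian with $L \cap V = 0$, $M_0 = V^\perp/V$, $L_V = (L \cap V^\perp)$ viewed in $M_0$. Given $f \in \mathcal{H}_{L_V}$ (functions on $H_0$ left-equivariant against $(\bar L_V, \chi_{L_V})$), define $f \circ \alpha_V$ on $H^V = V^\perp \times \mathbb{F}_q$. Then there is a unique function $f_1 \in \mathcal{H}_L$ on $H$ with $f_1(m) = q^{\dim V} (f\circ\alpha_V)(m)$ for all $m \in H^V$; uniqueness uses $V^\perp + L = M$. -/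
namespace LinearMap.BilinForm

variable {K V : Type*} [Field K] [AddCommGroup V] [Module K V] [FiniteDimensional K V]
  {B : LinearMap.BilinForm K V}

theorem codisjoint_orthogonal (hB : B.Nondegenerate) (hB₀ : B.IsRefl) {L W : Submodule K V}
    (h : Disjoint (B.orthogonal L) W) : Codisjoint L (B.orthogonal W) := by
  have hbot : B.orthogonal (L ⊔ B.orthogonal W) = ⊥ := by
    rw [eq_bot_iff, ← disjoint_iff.mp h]
    intro x hx
    refine ⟨B.orthogonal_le le_sup_left hx, ?_⟩
    rw [← orthogonal_orthogonal hB hB₀ W]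
    exact B.orthogonal_le le_sup_right hx
  rw [codisjoint_iff, ← orthogonal_orthogonal hB hB₀ (L ⊔ _), hbot, orthogonal_bot]

end LinearMap.BilinForm

namespace Heisenberg

variable {k M N : Type*} [Field k] [AddCommGroup M] [Module k M] [AddCommGroup N] [Module k N]

/-- Membership in `𝓗_L`. -/
def IsLeftEquivariant (ω : M →ₗ[k] M →ₗ[k] k) (ψ : AddChar k ℂ) (L : Submodule k M)
    (F : M × k → ℂ) : Prop :=
  ∀ l ∈ L, ∀ a : k, ∀ h : M × k, F (Hmul ω (l, a) h) = ψ a * F h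

variable {ω : M →ₗ[k] M →ₗ[k] k} {ψ : AddChar k ℂ} {L : Submodule k M} {F : M × k → ℂ}

theorem IsLeftEquivariant.apply_add_center (hF : IsLeftEquivariant ω ψ L F) (m : M) (a c : k) :
    F (m, a + c) = ψ a * F (m, c) := by
  simpa [Hmul] using hF 0 L.zero_mem a (m, c)

theorem IsLeftEquivariant.apply_add (hF : IsLeftEquivariant ω ψ L F) {l : M} (hl : l ∈ L)
    (m : M) (c : k) : F (l + m, c) = F (m, c - 2⁻¹ * ω l m) := by
  have := hF l hl 0 (m, c - 2⁻¹ * ω l m)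
  simp only [Hmul, AddChar.map_zero_eq_one, one_mul] at this
  rw [← this]
  congr
  ring

theorem IsLeftEquivariant.const_mul (hF : IsLeftEquivariant ω ψ L F) (C : ℂ) :
    IsLeftEquivariant ω ψ L (fun h => C * F h) := by
  intro l hl a h
  simp only [hF l hl a h, mul_left_comm]

theorem IsLeftEquivariant.comp_prodMap {ω' : N →ₗ[k] N →ₗ[k] k} {L' : Submodule k N}
    (φ : N →ₗ[k] M) (hφ : ∀ x y, ω (φ x) (φ y) = ω' x y) (hL' : L'.map φ ≤ L)
    (hF : IsLeftEquivariant ω ψ L F) : IsLeftEquivariant ω' ψ L' (F ∘ Prod.map φ id) := by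
  intro l hl a h
  have := hF (φ l) (hL' (Submodule.mem_map_of_mem hl)) a (φ h.1, h.2)
  simp only [Hmul, Function.comp_apply, Prod.map, id, map_add, hφ] at this ⊢
  exact this

section Restriction

variable {W : Submodule k M}

theorem IsLeftEquivariant.eq_of_eqOn (hLW : Codisjoint L W) {G : M × k → ℂ}
    (hF : IsLeftEquivariant ω ψ L F) (hG : IsLeftEquivariant ω ψ L G)
    (hFG : ∀ (w : W) (a : k), F (w, a) = G (w, a)) : F = G := by
  funext ⟨m, c⟩
  obtain ⟨l, w, hl, hw, rfl⟩ := Submodule.codisjoint_iff_exists_add_eq.mp hLW m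
  rw [hF.apply_add hl, hG.apply_add hl]
  exact hFG ⟨w, hw⟩ _

variable (hL : ∀ x ∈ L, ∀ y ∈ L, ω x y = 0) {g : W × k → ℂ}
  (hg : IsLeftEquivariant (ω.domRestrict₁₂ W W) ψ (L.comap W.subtype) g)
include hL hg

/-- The value an extension of `g` must take at `(l + w, c)` does not depend on the splitting. -/
theorem apply_sub_eq_of_add_eq {l₁ l₂ : M} (hl₁ : l₁ ∈ L) (hl₂ : l₂ ∈ L) {w₁ w₂ : W}
    (h : l₁ + w₁ = l₂ + w₂) (c : k) :
    g (w₁, c - 2⁻¹ * ω l₁ w₁) = g (w₂, c - 2⁻¹ * ω l₂ w₂) := by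
  have hδ : ((w₁ - w₂ : W) : M) = l₂ - l₁ := by
    rw [W.coe_sub, sub_eq_sub_iff_add_eq_add, add_comm, h]
  have hδL : w₁ - w₂ ∈ L.comap W.subtype := by
    simpa [hδ] using L.sub_mem hl₂ hl₁
  have hw₁ : (w₁ : M) = (l₂ - l₁) + w₂ := by rw [← hδ, W.coe_sub, sub_add_cancel]
  have := hg.apply_add hδL w₂ (c - 2⁻¹ * ω l₁ w₁)
  rw [sub_add_cancel, LinearMap.domRestrict₁₂_apply, hδ] at this
  rw [this]
  congr 2
  rw [hw₁]
  simp only [map_add, map_sub, LinearMap.sub_apply, hL l₁ hl₁ l₂ hl₂, hL l₁ hl₁ l₁ hl₁]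
  ring

theorem exists_isLeftEquivariant_extension (hLW : Codisjoint L W) :
    ∃ F : M × k → ℂ, IsLeftEquivariant ω ψ L F ∧ ∀ (w : W) (a : k), F (w, a) = g (w, a) := by
  choose l w hl hw hlw using Submodule.codisjoint_iff_exists_add_eq.mp hLW
  let F : M × k → ℂ := fun p => g (⟨w p.1, hw _⟩, p.2 - 2⁻¹ * ω (l p.1) (w p.1))
  have hF {l' w' : M} (hl' : l' ∈ L) (hw' : w' ∈ W) (c : k) :
      F (l' + w', c) = g (⟨w', hw'⟩, c - 2⁻¹ * ω l' w') :=
    apply_sub_eq_of_add_eq hL hg (hl _) hl' (w₁ := ⟨_, hw _⟩) (w₂ := ⟨w', hw'⟩) (hlw _) c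
  refine ⟨F, ?_, fun w' a => by simpa using hF L.zero_mem w'.2 a⟩
  rintro l₀ hl₀ a ⟨m, c⟩
  obtain ⟨l', w', hl', hw', rfl⟩ := Submodule.codisjoint_iff_exists_add_eq.mp hLW m
  have hmul : Hmul ω (l₀, a) (l' + w', c)
      = ((l₀ + l') + w', a + (c - 2⁻¹ * ω l' w') + 2⁻¹ * ω (l₀ + l') w') := by
    simp only [Hmul, map_add, LinearMap.add_apply, hL l₀ hl₀ l' hl', add_assoc]
    congr 1
    ring
  rw [hmul, hF (L.add_mem hl₀ hl') hw', hF hl' hw', add_sub_cancel_right]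
  exact hg.apply_add_center _ _ _

end Restriction

end Heisenberg

open Heisenberg in
theorem statement15_general {k M : Type*} [Field k] [Fintype k]
    [AddCommGroup M] [Module k M] [FiniteDimensional k M]
    (ω : M →ₗ[k] M →ₗ[k] k)
    (halt : ∀ m : M, ω m m = 0)
    (hnd : ∀ m : M, (∀ m' : M, ω m m' = 0) → m = 0)
    (ψ : AddChar k ℂ)
    (V L : Submodule k M)
    (hL : LinearMap.BilinForm.orthogonal ω L = L)
    (hLV : L ⊓ V = ⊥)
    (Vp : Submodule k M) (hVp : Vp = LinearMap.BilinForm.orthogonal ω V)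
    (V' : Submodule k ↥Vp)
    (ω₀ : (↥Vp ⧸ V') →ₗ[k] (↥Vp ⧸ V') →ₗ[k] k)
    (hω₀ : ∀ x y : ↥Vp,
      ω₀ (Submodule.Quotient.mk x) (Submodule.Quotient.mk y) = ω ↑x ↑y)
    (f : ((↥Vp ⧸ V') × k) → ℂ)
    -- `f ∈ 𝓗_{L_V}`, where `L_V` is the image of `L ∩ V^⊥` in `M₀`
    (hf : ∀ l ∈ Submodule.map (Submodule.mkQ V') (Submodule.comap Vp.subtype L),
      ∀ a : k, ∀ h : (↥Vp ⧸ V') × k,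
        f (Hmul ω₀ (l, a) h) = ψ a * f h) :
    ∃! f₁ : (M × k) → ℂ,
      (∀ l ∈ L, ∀ a : k, ∀ h : M × k, f₁ (Hmul ω (l, a) h) = ψ a * f₁ h)
      ∧ ∀ (v : ↥Vp) (a : k),
          f₁ ((v : M), a)
            = (Fintype.card k : ℂ) ^ (Module.finrank k ↥V) *
                f ((Submodule.Quotient.mk v : ↥Vp ⧸ V'), a) := by
  have hrefl : LinearMap.IsRefl ω := LinearMap.IsAlt.isRefl halt
  have hLiso : ∀ x ∈ L, ∀ y ∈ L, ω x y = 0 := by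
    intro x hx y hy
    rw [← hL] at hy
    exact hy x hx
  have hLVp : Codisjoint L Vp := hVp ▸ LinearMap.BilinForm.codisjoint_orthogonal
    (hrefl.nondegenerate_iff_separatingLeft.mpr hnd) hrefl (disjoint_iff.mpr (hL.symm ▸ hLV))
  have hg : IsLeftEquivariant (ω.domRestrict₁₂ Vp Vp) ψ (L.comap Vp.subtype)
      (fun p => (Fintype.card k : ℂ) ^ Module.finrank k V * f (V'.mkQ p.1, p.2)) :=
    (IsLeftEquivariant.comp_prodMap V'.mkQ (fun x y => hω₀ x y) le_rfl hf).const_mul _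
  obtain ⟨F, hF, hFg⟩ := exists_isLeftEquivariant_extension hLiso hg hLVp
  exact ⟨F, ⟨hF, hFg⟩, fun G ⟨hG, hGg⟩ =>
    IsLeftEquivariant.eq_of_eqOn hLVp hG hF fun w a => (hGg w a).trans (hFg w a).symm⟩

theorem statement15 {k M : Type*} [Field k] [Fintype k]
    [AddCommGroup M] [Module k M] [FiniteDimensional k M] [Fintype M]
    (hchar : ringChar k ≠ 2) (d : ℕ)
    (hdim : Module.finrank k M = 2 * d)
    (ω : M →ₗ[k] M →ₗ[k] k)
    (halt : ∀ m : M, ω m m = 0)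
    (hnd : ∀ m : M, (∀ m' : M, ω m m' = 0) → m = 0)
    (ψ : AddChar k ℂ) (hψ : ∃ a : k, ψ a ≠ 1)
    (V L : Submodule k M)
    (hViso : ∀ x ∈ V, ∀ y ∈ V, ω x y = 0)
    (hL : LinearMap.BilinForm.orthogonal ω L = L)
    (hLV : L ⊓ V = ⊥)
    (Vp : Submodule k M) (hVp : Vp = LinearMap.BilinForm.orthogonal ω V)
    (V' : Submodule k ↥Vp) (hV' : V' = Submodule.comap Vp.subtype V)
    (ω₀ : (↥Vp ⧸ V') →ₗ[k] (↥Vp ⧸ V') →ₗ[k] k)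
    (hω₀ : ∀ x y : ↥Vp,
      ω₀ (Submodule.Quotient.mk x) (Submodule.Quotient.mk y) = ω ↑x ↑y)
    (f : ((↥Vp ⧸ V') × k) → ℂ)
    -- `f ∈ 𝓗_{L_V}`, where `L_V` is the image of `L ∩ V^⊥` in `M₀`
    (hf : ∀ l ∈ Submodule.map (Submodule.mkQ V') (Submodule.comap Vp.subtype L),
      ∀ a : k, ∀ h : (↥Vp ⧸ V') × k,
        f (Hmul ω₀ (l, a) h) = ψ a * f h) :
    ∃! f₁ : (M × k) → ℂ,
      (∀ l ∈ L, ∀ a : k, ∀ h : M × k, f₁ (Hmul ω (l, a) h) = ψ a * f₁ h)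
      ∧ ∀ (v : ↥Vp) (a : k),
          f₁ ((v : M), a)
            = (Fintype.card k : ℂ) ^ (Module.finrank k ↥V) *
                f ((Submodule.Quotient.mk v : ↥Vp ⧸ V'), a) :=
  statement15_general ω halt hnd ψ V L hL hLV Vp hVp V' ω₀ hω₀ f hf
end
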